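/- arXiv:1312.2304 — 5 statements merged into one kernel-verified Lean document; each statement's English description precedes it below -/
import Mathlib

section
/- A subset ℓ of a compact set Ω ⊆ ℝ² is a closed line segment if and only if it is closed, convex, and can be disconnected by the removal of a single point (i.e., there exists a point x ∈ ℓ such that ℓ \ {x} is disconnected). -/
/-!
Removing an interior point `x` disconnects a segment `[a, b]`: a continuous linear form `f`
with `f a ≠ f b` is injective on the segment, so it maps `[a, b] \ {x}` onto an interval with
the interior point `f x` removed.

Conversely, let `ℓ` be closed and convex; it is compact, being a closed subset of `Ω`. If `ℓ` is
not collinear, then `ℓ \ {x}` is preconnected for every `x`: two of its points `p`, `q` are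
joined by `[p, q]` unless `x ∈ [p, q]`, and then by `[p, r] ∪ [r, q]` for any `r ∈ ℓ` off the
line `pq`. If `ℓ` is collinear, it is the segment between two points realising its diameter, and
these are distinct because removing a point from a singleton leaves the empty set.
-/

open Set

section

variable {E : Type*} [AddCommGroup E] [Module ℝ E]

theorem AffineSubspace.mem_of_mem_segment {L : AffineSubspace ℝ E} {y x r : E} (hy : y ∈ L)
    (hx : x ∈ L) (hxy : x ≠ y) (h : x ∈ segment ℝ y r) : r ∈ L :=
  affineSpan_pair_le_of_mem_of_mem hy hx <|
    (mem_segment_iff_wbtw.1 h).collinear.mem_affineSpan_of_mem_of_ne (by simp) (by simp) (by simp)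
      hxy.symm

theorem collinear_of_subset_affineSpan_pair {s : Set E} {p q : E} (h : s ⊆ line[ℝ, p, q]) :
    Collinear ℝ s := by
  have hline : Collinear ℝ (line[ℝ, p, q] : Set E) := by
    change Module.rank ℝ (line[ℝ, p, q]).direction ≤ 1
    rw [direction_affineSpan]
    exact collinear_pair ℝ p q
  exact hline.subset h

theorem LinearMap.injOn_segment {F : Type*} [AddCommGroup F] [Module ℝ F] (f : E →ₗ[ℝ] F)
    {a b : E} (hf : f a ≠ f b) : InjOn f (segment ℝ a b) := by
  rw [segment_eq_image_lineMap]
  rintro _ ⟨s, -, rfl⟩ _ ⟨t, -, rfl⟩ hst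
  rw [← f.coe_toAffineMap, AffineMap.apply_lineMap, AffineMap.apply_lineMap] at hst
  rw [AffineMap.lineMap_injective ℝ hf hst]

variable [TopologicalSpace E]

theorem not_isPreconnected_segment_diff_of_mem_openSegment [SeparatingDual ℝ E] {a b x : E}
    (hab : a ≠ b) (hx : x ∈ openSegment ℝ a b) : ¬ IsPreconnected (segment ℝ a b \ {x}) := by
  intro hpre
  obtain ⟨f, hf⟩ := SeparatingDual.exists_separating_of_ne (R := ℝ) hab
  have hxseg := openSegment_subset_segment ℝ a b hx
  have ha : a ∈ segment ℝ a b \ {x} := ⟨left_mem_segment ℝ a b, fun h => hab <|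
    (left_mem_openSegment_iff (𝕜 := ℝ)).1 <| by rwa [← mem_singleton_iff.1 h] at hx⟩
  have hb : b ∈ segment ℝ a b \ {x} := ⟨right_mem_segment ℝ a b, fun h => hab <|
    (right_mem_openSegment_iff (𝕜 := ℝ)).1 <| by rwa [← mem_singleton_iff.1 h] at hx⟩
  have hfx : f x ∈ uIcc (f a) (f b) := by
    rw [← segment_eq_uIcc]
    obtain ⟨s, t, hs, ht, hst, rfl⟩ := hxseg
    exact ⟨s, t, hs, ht, hst, by simp⟩
  have himage : (f '' (segment ℝ a b \ {x})).OrdConnected :=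
    isPreconnected_iff_ordConnected.1 (hpre.image f f.continuous.continuousOn)
  obtain ⟨y, ⟨hy, hyx⟩, hfy⟩ :=
    himage.uIcc_subset (mem_image_of_mem f ha) (mem_image_of_mem f hb) hfx
  exact hyx (f.toLinearMap.injOn_segment hf hy hxseg hfy)

variable [ContinuousAdd E] [ContinuousSMul ℝ E]

theorem isCompact_segment (a b : E) : IsCompact (segment ℝ a b) :=
  Path.range_segment a b ▸ isCompact_range (Path.segment a b).continuous

theorem Convex.isPreconnected_diff_singleton_of_not_collinear {s : Set E} (hs : Convex ℝ s)
    (hcol : ¬ Collinear ℝ s) (x : E) : IsPreconnected (s \ {x}) := by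
  refine isPreconnected_of_forall_pair fun p hp q hq => ?_
  have hsub : ∀ {u v}, u ∈ s → v ∈ s → x ∉ segment ℝ u v → segment ℝ u v ⊆ s \ {x} :=
    fun hu hv hx y hy => ⟨hs.segment_subset hu hv hy, fun h => hx (mem_singleton_iff.1 h ▸ hy)⟩
  by_cases hxpq : x ∈ segment ℝ p q
  case neg =>
    exact ⟨segment ℝ p q, hsub hp.1 hq.1 hxpq, left_mem_segment ℝ p q, right_mem_segment ℝ p q,
      (convex_segment p q).isPreconnected⟩
  obtain ⟨r, hr, hrL⟩ : ∃ r ∈ s, r ∉ line[ℝ, p, q] := by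
    by_contra! h
    exact hcol (collinear_of_subset_affineSpan_pair h)
  have hxL : x ∈ line[ℝ, p, q] := (mem_segment_iff_wbtw.1 hxpq).mem_affineSpan
  have hxp : x ∉ segment ℝ p r := fun h =>
    hrL (AffineSubspace.mem_of_mem_segment (left_mem_affineSpan_pair ℝ p q) hxL
      (fun e => hp.2 (e ▸ rfl)) h)
  have hxq : x ∉ segment ℝ r q := fun h =>
    hrL (AffineSubspace.mem_of_mem_segment (right_mem_affineSpan_pair ℝ p q) hxL
      (fun e => hq.2 (e ▸ rfl)) (segment_symm ℝ r q ▸ h))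
  exact ⟨segment ℝ p r ∪ segment ℝ r q, union_subset (hsub hp.1 hr hxp) (hsub hr hq.1 hxq),
    Or.inl (left_mem_segment ℝ p r), Or.inr (right_mem_segment ℝ r q),
    (convex_segment p r).isPreconnected.union r (right_mem_segment ℝ p r)
      (left_mem_segment ℝ r q) (convex_segment r q).isPreconnected⟩

end

theorem IsCompact.exists_eq_segment_of_collinear {E : Type*} [NormedAddCommGroup E]
    [NormedSpace ℝ E] {s : Set E} (hs : IsCompact s) (hconv : Convex ℝ s) (hcol : Collinear ℝ s)
    (hne : s.Nonempty) : ∃ a b, s = segment ℝ a b := by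
  obtain ⟨⟨a, b⟩, ⟨ha, hb⟩, hmax⟩ :=
    (hs.prod hs).exists_isMaxOn (hne.prod hne) (continuous_dist (α := E)).continuousOn
  refine ⟨a, b, Subset.antisymm (fun y hy => ?_) (hconv.segment_subset ha hb)⟩
  have hle : ∀ {u v}, u ∈ s → v ∈ s → dist u v ≤ dist a b :=
    fun hu hv => hmax (mk_mem_prod hu hv)
  have hayb : ({a, y, b} : Set E) ⊆ s := by simp [insert_subset_iff, ha, hb, hy]
  rcases (hcol.subset hayb).wbtw_or_wbtw_or_wbtw with h | h | h
  · exact h.mem_segment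
  · have hsum := h.dist_add_dist
    rw [dist_comm b a, dist_comm y a] at hsum
    obtain rfl : y = b := dist_eq_zero.1 (by linarith [hle ha hy, dist_nonneg (x := y) (y := b)])
    exact right_mem_segment ℝ a y
  · have hsum := h.dist_add_dist
    rw [dist_comm b a] at hsum
    obtain rfl : a = y := dist_eq_zero.1 (by linarith [hle hb hy, dist_nonneg (x := a) (y := y)])
    exact left_mem_segment ℝ a b

/-- A subset `ℓ` of a compact set `Ω ⊆ ℝ²` is a (nondegenerate) closed line segment if and
only if it is closed, convex, and can be disconnected by the removal of a single point. -/
theorem stmt0 (Ω : Set (ℝ × ℝ)) (hΩ : IsCompact Ω) (ℓ : Set (ℝ × ℝ)) (hℓΩ : ℓ ⊆ Ω) :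
    (∃ a b : ℝ × ℝ, a ≠ b ∧ ℓ = segment ℝ a b) ↔
      (IsClosed ℓ ∧ Convex ℝ ℓ ∧ ∃ x ∈ ℓ, ¬ IsPreconnected (ℓ \ {x})) := by
  constructor
  · rintro ⟨a, b, hab, rfl⟩
    exact ⟨(isCompact_segment a b).isClosed, convex_segment a b, midpoint ℝ a b,
      midpoint_mem_segment a b,
      not_isPreconnected_segment_diff_of_mem_openSegment hab (midpoint_mem_openSegment a b)⟩
  · rintro ⟨hcl, hconv, x, hx, hdis⟩
    have hcol : Collinear ℝ ℓ := by_contra fun h =>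
      hdis (hconv.isPreconnected_diff_singleton_of_not_collinear h x)
    obtain ⟨a, b, rfl⟩ := (hΩ.of_isClosed_subset hcl hℓΩ).exists_eq_segment_of_collinear hconv
      hcol ⟨x, hx⟩
    refine ⟨a, b, fun hab => hdis ?_, rfl⟩
    rw [← hab, segment_same] at hx ⊢
    rw [mem_singleton_iff.1 hx, sdiff_self]
    exact isPreconnected_empty
end

section
/- If a compact subset h(ℓ) of ℝ² arising as the image of a segment under a homeomorphism fails to be a segment because some midpoint (h(x,0)+h(x',0))/2 is not in h(ℓ_0), then with ε = dist of this midpoint to h(ℓ_0), any y with ‖(t,y)−(t,0)‖-images controlled within ε/3 yields that h(ℓ_y) cannot contain the midpoint (h(x,y)+h(x',y))/2 at the point h(t,y) for any t; formally: if d(v, h(ℓ_0)) = ε > 0 where v = (h(x,0)+h(x',0))/2, and δ > 0 satisfies ‖h(u)−h(u')‖ < ε/3 whenever ‖u−u'‖ ≤ δ, then for 0 ≤ y ≤ δ there is no t ∈ [0,1] with h(t,y) = (h(x,y)+h(x',y))/2. -/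
/- If `h(t,y)` were the midpoint of `h(x,y)` and `h(x',y)`, moving the three points down to
the segment `ℓ_0` changes each by less than `ε/3`; since midpoints are `1`-Lipschitz in the
pair of endpoints, `h(t,0) ∈ h(ℓ_0)` would lie within `2ε/3 < ε` of `v`. -/

theorem dist_midpoint_lt_two_mul_of_eq_midpoint {V : Type*} [SeminormedAddCommGroup V]
    [NormedSpace ℝ V] {a b c a' b' c' : V} {r : ℝ} (ha : dist a a' < r) (hb : dist b b' < r)
    (hc : dist c c' < r) (hmid : c = midpoint ℝ a b) :
    dist (midpoint ℝ a' b') c' < 2 * r := by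
  have hmid' : dist (midpoint ℝ a' b') c < r := by
    calc dist (midpoint ℝ a' b') c ≤ (dist a' a + dist b' b) / 2 :=
          hmid ▸ dist_midpoint_midpoint_le a' b' a b
      _ < r := by rw [dist_comm a', dist_comm b']; linarith
  linarith [dist_triangle (midpoint ℝ a' b') c c']

theorem norm_mk_sub_mk_zero (s y : ℝ) : ‖((s, y) : ℝ × ℝ) - (s, 0)‖ = |y| := by
  simp [Prod.norm_def]

theorem stmt4_general (h : ℝ × ℝ → ℝ × ℝ)
    (x x' : ℝ) (hx : x ∈ Set.Icc (0:ℝ) 1) (hx' : x' ∈ Set.Icc (0:ℝ) 1)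
    (ε δ : ℝ)
    (hε : ε = Metric.infDist (midpoint ℝ (h (x, 0)) (h (x', 0)))
      (h '' (Set.Icc (0:ℝ) 1 ×ˢ ({0} : Set ℝ))))
    (hε0 : 0 < ε) (hδ1 : δ ≤ 1)
    (hδ : ∀ u ∈ Set.Icc (0:ℝ) 1 ×ˢ Set.Icc (0:ℝ) 1,
      ∀ u' ∈ Set.Icc (0:ℝ) 1 ×ˢ Set.Icc (0:ℝ) 1, ‖u - u'‖ ≤ δ → ‖h u - h u'‖ < ε / 3) :
    ∀ y : ℝ, 0 ≤ y → y ≤ δ →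
      ¬ ∃ t ∈ Set.Icc (0:ℝ) 1, h (t, y) = midpoint ℝ (h (x, y)) (h (x', y)) := by
  rintro y hy0 hyδ ⟨t, ht, hmid⟩
  have hdrop : ∀ s ∈ Set.Icc (0:ℝ) 1, dist (h (s, y)) (h (s, 0)) < ε / 3 := fun s hs => by
    rw [dist_eq_norm]
    refine hδ _ ⟨hs, hy0, hyδ.trans hδ1⟩ _ ⟨hs, le_rfl, zero_le_one⟩ ?_
    rwa [norm_mk_sub_mk_zero, abs_of_nonneg hy0]
  have hclose := dist_midpoint_lt_two_mul_of_eq_midpoint (hdrop x hx) (hdrop x' hx')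
    (hdrop t ht) hmid
  have hfar : ε ≤ dist (midpoint ℝ (h (x, 0)) (h (x', 0))) (h (t, 0)) :=
    hε ▸ Metric.infDist_le_dist_of_mem ⟨(t, 0), ⟨ht, rfl⟩, rfl⟩
  linarith

/-- Quantitative step in the proof: if `v = (h(x,0)+h(x',0))/2` has distance `ε > 0` from
`h(ℓ_0)`, and `δ ≤ 1` is a uniform-continuity modulus for `ε/3`, then for `0 ≤ y ≤ δ`
there is no `t ∈ [0,1]` with `h(t,y) = (h(x,y)+h(x',y))/2`. -/
theorem stmt4 (h : ℝ × ℝ → ℝ × ℝ)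
    (hc : ContinuousOn h (Set.Icc (0:ℝ) 1 ×ˢ Set.Icc (0:ℝ) 1))
    (x x' : ℝ) (hx : x ∈ Set.Icc (0:ℝ) 1) (hx' : x' ∈ Set.Icc (0:ℝ) 1)
    (ε δ : ℝ)
    (hε : ε = Metric.infDist (midpoint ℝ (h (x, 0)) (h (x', 0)))
      (h '' (Set.Icc (0:ℝ) 1 ×ˢ ({0} : Set ℝ))))
    (hε0 : 0 < ε) (hδ0 : 0 < δ) (hδ1 : δ ≤ 1)
    (hδ : ∀ u ∈ Set.Icc (0:ℝ) 1 ×ˢ Set.Icc (0:ℝ) 1,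
      ∀ u' ∈ Set.Icc (0:ℝ) 1 ×ˢ Set.Icc (0:ℝ) 1, ‖u - u'‖ ≤ δ → ‖h u - h u'‖ < ε / 3) :
    ∀ y : ℝ, 0 ≤ y → y ≤ δ →
      ¬ ∃ t ∈ Set.Icc (0:ℝ) 1, h (t, y) = midpoint ℝ (h (x, y)) (h (x', y)) :=
  stmt4_general h x x' hx hx' ε δ hε hε0 hδ1 hδ
end

section
/- The map h(x,y) = ((x+1)/(y+1), 2y/(y+1)) maps every line segment contained in the closed unit square [0,1]² to a line segment, maps the unit square bijectively onto the trapezoid with vertices (1,0), (2,0), (1,1), (1/2,1), and is not an affine map. -/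
/-!
The map is a perspective map `p ↦ (l p)⁻¹ • g p` with `g p = (x + 1, 2y)` and `l p = y + 1` affine,
and `l > 0` on the square. Along a segment `t ↦ lineMap a b t` both `g` and `l` vary affinely, so
the image point is `lineMap (h a) (h b) s` with `s = t l(b) / ((1 - t) l(a) + t l(b))`; this
reparametrisation is a bijection of `[0, 1]` whose inverse is the same formula with `l(a)`, `l(b)`
swapped. The map is inverted on the trapezoid by `(u, v) ↦ ((2u - 2 + v) / (2 - v), v / (2 - v))`,
and it is not affine because `h(0,0) + h(1,1) ≠ h(1,0) + h(0,1)`.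
-/

open Set AffineMap

noncomputable def perspectiveParam (α β t : ℝ) : ℝ := t * β / ((1 - t) * α + t * β)

section PerspectiveParam

variable {α β : ℝ}

lemma perspectiveParam_denom_pos (hα : 0 < α) (hβ : 0 < β) {t : ℝ} (ht : t ∈ Icc (0 : ℝ) 1) :
    0 < (1 - t) * α + t * β := by
  rcases ht with ⟨h0, h1⟩
  rcases h0.eq_or_lt with rfl | h0
  · simpa using hα
  · nlinarith

lemma perspectiveParam_mem_Icc (hα : 0 < α) (hβ : 0 < β) {t : ℝ} (ht : t ∈ Icc (0 : ℝ) 1) :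
    perspectiveParam α β t ∈ Icc (0 : ℝ) 1 := by
  have hD := perspectiveParam_denom_pos hα hβ ht
  refine ⟨div_nonneg (mul_nonneg ht.1 hβ.le) hD.le, (div_le_one hD).2 ?_⟩
  nlinarith [ht.2]

lemma perspectiveParam_perspectiveParam (hα : 0 < α) (hβ : 0 < β) {t : ℝ}
    (ht : t ∈ Icc (0 : ℝ) 1) : perspectiveParam α β (perspectiveParam β α t) = t := by
  have hD := perspectiveParam_denom_pos hβ hα ht
  have hα0 := hα.ne'
  have hβ0 := hβ.ne'
  unfold perspectiveParam
  field_simp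
  rw [show (1 - t) * β + t * α - t * α + t * β = β by ring, mul_div_cancel_right₀ t hβ0]

lemma image_perspectiveParam_Icc (hα : 0 < α) (hβ : 0 < β) :
    perspectiveParam α β '' Icc 0 1 = Icc 0 1 :=
  Subset.antisymm (image_subset_iff.2 fun _ ht => perspectiveParam_mem_Icc hα hβ ht)
    fun t ht => ⟨perspectiveParam β α t, perspectiveParam_mem_Icc hβ hα ht,
      perspectiveParam_perspectiveParam hα hβ ht⟩

end PerspectiveParam

section Perspective

variable {E F : Type*} [AddCommGroup E] [Module ℝ E] [AddCommGroup F] [Module ℝ F]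

lemma perspective_lineMap (g : E →ᵃ[ℝ] F) (l : E →ᵃ[ℝ] ℝ) {a b : E} (ha : l a ≠ 0)
    (hb : l b ≠ 0) {t : ℝ} (ht : (1 - t) * l a + t * l b ≠ 0) :
    (l (lineMap a b t))⁻¹ • g (lineMap a b t) =
      lineMap ((l a)⁻¹ • g a) ((l b)⁻¹ • g b) (perspectiveParam (l a) (l b) t) := by
  rw [apply_lineMap, apply_lineMap]
  simp only [lineMap_apply_module, smul_add, smul_smul, smul_eq_mul, perspectiveParam]
  congr 2
  · field_simp
    ring
  · field_simp

theorem image_segment_perspective (g : E →ᵃ[ℝ] F) (l : E →ᵃ[ℝ] ℝ) {a b : E} (ha : 0 < l a)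
    (hb : 0 < l b) :
    (fun p => (l p)⁻¹ • g p) '' segment ℝ a b = segment ℝ ((l a)⁻¹ • g a) ((l b)⁻¹ • g b) := by
  rw [segment_eq_image_lineMap, segment_eq_image_lineMap, image_image]
  conv_rhs => rw [← image_perspectiveParam_Icc ha hb, image_image]
  exact image_congr fun t ht =>
    perspective_lineMap g l ha.ne' hb.ne' (perspectiveParam_denom_pos ha hb ht).ne'

end Perspective

lemma add_eq_add_of_eq_linearMap_add {R M N : Type*} [Ring R] [AddCommGroup M] [Module R M]
    [AddCommGroup N] [Module R N] {f : M → N} {s : Set M} {L : M →ₗ[R] N} {c : N}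
    (hf : ∀ p ∈ s, f p = L p + c) {a b a' b' : M} (ha : a ∈ s) (hb : b ∈ s) (ha' : a' ∈ s)
    (hb' : b' ∈ s) (h : a + b = a' + b') : f a + f b = f a' + f b' := by
  rw [hf a ha, hf b hb, hf a' ha', hf b' hb', add_add_add_comm, ← map_add, h, map_add,
    add_add_add_comm]

noncomputable def trapezoidMap (p : ℝ × ℝ) : ℝ × ℝ :=
  ((p.1 + 1) / (p.2 + 1), 2 * p.2 / (p.2 + 1))

noncomputable def trapezoidMapInv (q : ℝ × ℝ) : ℝ × ℝ :=
  ((2 * q.1 - 2 + q.2) / (2 - q.2), q.2 / (2 - q.2))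

def trapezoid : Set (ℝ × ℝ) :=
  {p | 0 ≤ p.2 ∧ p.2 ≤ 1 ∧ 2 ≤ 2 * p.1 + p.2 ∧ p.1 + p.2 ≤ 2}

lemma trapezoidMap_image_segment {a b : ℝ × ℝ} (ha : -1 < a.2) (hb : -1 < b.2) :
    trapezoidMap '' segment ℝ a b = segment ℝ (trapezoidMap a) (trapezoidMap b) := by
  let l : ℝ × ℝ →ᵃ[ℝ] ℝ := (LinearMap.snd ℝ ℝ ℝ).toAffineMap + AffineMap.const ℝ _ 1
  let g : ℝ × ℝ →ᵃ[ℝ] ℝ × ℝ :=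
    ((LinearMap.fst ℝ ℝ ℝ).prod (2 • LinearMap.snd ℝ ℝ ℝ)).toAffineMap +
      AffineMap.const ℝ _ (1, 0)
  have hmap : trapezoidMap = fun p => (l p)⁻¹ • g p := by
    ext p <;> simp [trapezoidMap, l, g, div_eq_inv_mul]
  rw [hmap]
  exact image_segment_perspective g l (by simp [l]; linarith) (by simp [l]; linarith)

lemma trapezoidMapInv_trapezoidMap {p : ℝ × ℝ} (hp : p.2 + 1 ≠ 0) :
    trapezoidMapInv (trapezoidMap p) = p := by
  have h2 : 2 - 2 * p.2 / (p.2 + 1) = 2 / (p.2 + 1) := by field_simp; ring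
  ext
  · simp only [trapezoidMapInv, trapezoidMap, h2]
    field_simp
    ring
  · simp only [trapezoidMapInv, trapezoidMap, h2]
    field_simp

lemma trapezoidMap_trapezoidMapInv {q : ℝ × ℝ} (hq : q.2 ≠ 2) :
    trapezoidMap (trapezoidMapInv q) = q := by
  have hq' : 2 - q.2 ≠ 0 := sub_ne_zero.2 hq.symm
  have h1 : q.2 / (2 - q.2) + 1 = 2 / (2 - q.2) := by field_simp; ring
  ext
  · simp only [trapezoidMapInv, trapezoidMap, h1]
    field_simp
    ring
  · simp only [trapezoidMapInv, trapezoidMap, h1]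
    field_simp

lemma mapsTo_trapezoidMap : MapsTo trapezoidMap (Icc 0 1 ×ˢ Icc 0 1) trapezoid := by
  rintro p ⟨⟨hx0, hx1⟩, hy0, hy1⟩
  have hd : (0 : ℝ) < p.2 + 1 := by linarith
  refine ⟨by simp only [trapezoidMap]; positivity, ?_, ?_, ?_⟩ <;>
    simp only [trapezoidMap, ← add_div, mul_div_assoc', le_div_iff₀ hd, div_le_iff₀ hd] <;>
    linarith

lemma mapsTo_trapezoidMapInv : MapsTo trapezoidMapInv trapezoid (Icc 0 1 ×ˢ Icc 0 1) := by
  rintro q ⟨hy0, hy1, hl, hr⟩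
  have hd : (0 : ℝ) < 2 - q.2 := by linarith
  simp only [trapezoidMapInv, mem_prod, mem_Icc, div_le_one hd]
  exact ⟨⟨div_nonneg (by linarith) hd.le, by linarith⟩, div_nonneg hy0 hd.le, by linarith⟩

lemma bijOn_trapezoidMap : BijOn trapezoidMap (Icc 0 1 ×ˢ Icc 0 1) trapezoid :=
  InvOn.bijOn
    ⟨fun p hp => trapezoidMapInv_trapezoidMap (by linarith [hp.2.1]),
      fun q hq => trapezoidMap_trapezoidMapInv (by linarith [hq.2.1])⟩
    mapsTo_trapezoidMap mapsTo_trapezoidMapInv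

lemma convex_trapezoid : Convex ℝ trapezoid := by
  rintro p ⟨h1, h2, h3, h4⟩ q ⟨g1, g2, g3, g4⟩ u v hu hv huv
  refine ⟨?_, ?_, ?_, ?_⟩ <;>
    simp only [Prod.fst_add, Prod.snd_add, Prod.smul_fst, Prod.smul_snd, smul_eq_mul] <;>
    nlinarith

lemma trapezoid_eq_convexHull :
    trapezoid = convexHull ℝ {((1 : ℝ), (0 : ℝ)), (2, 0), (1, 1), (1 / 2, 1)} := by
  set V : Set (ℝ × ℝ) := {(1, 0), (2, 0), (1, 1), (1 / 2, 1)}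
  refine Subset.antisymm ?_ (convexHull_min ?_ convex_trapezoid)
  · rintro ⟨x, y⟩ ⟨hy0, hy1, hl, hr⟩
    -- the horizontal slice at height `y` joins a point of the left edge to one of the right edge
    have hleft : ((1 - y / 2, y) : ℝ × ℝ) ∈ convexHull ℝ V :=
      segment_subset_convexHull (x := (1, 0)) (y := (1 / 2, 1)) (by simp [V]) (by simp [V])
        ⟨1 - y, y, by linarith, hy0, by ring, by ext <;> simp; ring⟩
    have hright : ((2 - y, y) : ℝ × ℝ) ∈ convexHull ℝ V :=
      segment_subset_convexHull (x := (2, 0)) (y := (1, 1)) (by simp [V]) (by simp [V])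
        ⟨1 - y, y, by linarith, hy0, by ring, by ext <;> simp; ring⟩
    refine (convex_convexHull ℝ V).segment_subset hleft hright ?_
    rw [← Prod.image_mk_segment_left, segment_eq_Icc (by linarith)]
    exact ⟨x, ⟨by linarith, by linarith⟩, rfl⟩
  · rintro p (rfl | rfl | rfl | rfl) <;> norm_num [trapezoid]

/-- The map `h(x,y) = ((x+1)/(y+1), 2y/(y+1))` maps every line segment contained in the
closed unit square to a line segment, maps the unit square bijectively onto the trapezoid
with vertices `(1,0)`, `(2,0)`, `(1,1)`, `(1/2,1)`, and is not (the restriction of) an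
affine map. -/
theorem stmt7 (h : ℝ × ℝ → ℝ × ℝ)
    (hdef : ∀ p : ℝ × ℝ, h p = ((p.1 + 1) / (p.2 + 1), 2 * p.2 / (p.2 + 1))) :
    (∀ a b : ℝ × ℝ, a ∈ Set.Icc (0:ℝ) 1 ×ˢ Set.Icc (0:ℝ) 1 →
        b ∈ Set.Icc (0:ℝ) 1 ×ˢ Set.Icc (0:ℝ) 1 →
        ∃ c d : ℝ × ℝ, h '' segment ℝ a b = segment ℝ c d) ∧
      Set.InjOn h (Set.Icc (0:ℝ) 1 ×ˢ Set.Icc (0:ℝ) 1) ∧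
      h '' (Set.Icc (0:ℝ) 1 ×ˢ Set.Icc (0:ℝ) 1) =
        convexHull ℝ {((1:ℝ), (0:ℝ)), (2, 0), (1, 1), (1/2, 1)} ∧
      ¬ ∃ (L : ℝ × ℝ →ₗ[ℝ] ℝ × ℝ) (b : ℝ × ℝ),
          ∀ p ∈ Set.Icc (0:ℝ) 1 ×ˢ Set.Icc (0:ℝ) 1, h p = L p + b := by
  obtain rfl : h = trapezoidMap := funext hdef
  refine ⟨fun a b ha hb => ⟨_, _, trapezoidMap_image_segment (by linarith [ha.2.1])
    (by linarith [hb.2.1])⟩, bijOn_trapezoidMap.injOn,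
    by rw [bijOn_trapezoidMap.image_eq, trapezoid_eq_convexHull], ?_⟩
  rintro ⟨L, c, hL⟩
  have hcorners := add_eq_add_of_eq_linearMap_add hL (a := (0, 0)) (b := (1, 1)) (a' := (1, 0))
    (b' := (0, 1)) (by norm_num) (by norm_num) (by norm_num) (by norm_num) (by norm_num)
  norm_num [trapezoidMap, Prod.ext_iff] at hcorners
end

section
/- The inverse of an invertible half-plane-affine map of ℝ² is a half-plane-affine map. -/
/-- `α : ℝ² → ℝ²` is a half-plane-affine map: it is invertible and there is a half-plane
splitting `{f ≤ c}`, `{c ≤ f}` (with `f` a nonzero linear functional) on whose two closed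
half-planes `α` agrees with affine maps `α₁`, `α₂` respectively. -/
def IsHalfPlaneAffine (α : ℝ × ℝ → ℝ × ℝ) : Prop :=
  Function.Bijective α ∧
    ∃ (f : ℝ × ℝ →ₗ[ℝ] ℝ) (c : ℝ), f ≠ 0 ∧
      ∃ (α₁ α₂ : ℝ × ℝ →ᵃ[ℝ] ℝ × ℝ),
        (∀ p : ℝ × ℝ, f p ≤ c → α p = α₁ p) ∧ (∀ p : ℝ × ℝ, c ≤ f p → α p = α₂ p)

/-!
Write `H₁ = {f ≤ c}` and `H₂ = {c ≤ f}`. Since `α` is injective and agrees with the affine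
map `αⱼ` on `Hⱼ`, which has nonempty interior, `αⱼ` is injective, hence an affine automorphism
`eⱼ` of `ℝ²`. The image `α(H₁) = e₁(H₁)` is the half-plane `{y | f (e₁⁻¹ y) ≤ c}`, on which
`α⁻¹ = e₁⁻¹`. On the opposite half-plane `{y | c ≤ f (e₁⁻¹ y)}` we have `α⁻¹ = e₂⁻¹`: if
`x = α⁻¹ y` were not in `H₂`, then `y = e₁ x`, so `f (e₁⁻¹ y) = f x < c`.
-/

open Set Function Topology

theorem AffineMap.injective_of_injOn {𝕜 V W : Type*} [NontriviallyNormedField 𝕜]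
    [NormedAddCommGroup V] [NormedSpace 𝕜 V] [AddCommGroup W] [Module 𝕜 W]
    (φ : V →ᵃ[𝕜] W) {s : Set V} (hs : (interior s).Nonempty) (h : InjOn φ s) :
    Injective φ := by
  rw [← φ.linear_injective_iff, injective_iff_map_eq_zero]
  intro v hv
  obtain ⟨p, hp⟩ := hs
  have hps : s ∈ 𝓝 p := mem_interior_iff_mem_nhds.mp hp
  have hline : ∀ᶠ t : 𝕜 in 𝓝 0, p + t • v ∈ s :=
    (show Continuous fun t : 𝕜 => p + t • v by fun_prop).tendsto' 0 p (by simp) hps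
  obtain ⟨t, hts, ht⟩ := ((hline.filter_mono nhdsWithin_le_nhds).and
    (self_mem_nhdsWithin (s := {0}ᶜ))).exists
  have hφ : φ (p + t • v) = φ p := by
    rw [add_comm, ← vadd_eq_add, φ.map_vadd, map_smul, hv, smul_zero, zero_vadd]
  have htv : t • v = 0 := by simpa using h hts (mem_of_mem_nhds hps) hφ
  exact (smul_eq_zero.mp htv).resolve_left ht

theorem AffineMap.bijective_of_injOn {V : Type*} [NormedAddCommGroup V] [NormedSpace ℝ V]
    [FiniteDimensional ℝ V] (φ : V →ᵃ[ℝ] V) {s : Set V} (hs : (interior s).Nonempty)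
    (h : InjOn φ s) : Bijective φ := by
  have hinj := φ.linear_injective_iff.mpr (φ.injective_of_injOn hs h)
  exact φ.linear_bijective_iff.mp ⟨hinj, LinearMap.injective_iff_surjective.mp hinj⟩

theorem AffineMap.apply_eq_linear_add {𝕜 V W : Type*} [Ring 𝕜] [AddCommGroup V] [Module 𝕜 V]
    [AddCommGroup W] [Module 𝕜 W] (k : V →ᵃ[𝕜] W) (y : V) : k y = k.linear y + k 0 := by
  simpa using congrFun k.decomp y

theorem LinearMap.interior_setOf_le_nonempty {V : Type*} [NormedAddCommGroup V] [NormedSpace ℝ V]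
    [FiniteDimensional ℝ V] {f : V →ₗ[ℝ] ℝ} (hf : f ≠ 0) (c : ℝ) :
    (interior {p | f p ≤ c}).Nonempty := by
  obtain ⟨p, hp⟩ := f.surjective hf (c - 1)
  have hopen : IsOpen {p | f p < c} := isOpen_lt f.continuous_of_finiteDimensional continuous_const
  have hsub : {p | f p < c} ⊆ {p | f p ≤ c} := ofPred_subset_ofPred.mpr fun _ => le_of_lt
  exact ⟨p, interior_maximal hsub hopen (by simp [hp])⟩

theorem LinearMap.interior_setOf_ge_nonempty {V : Type*} [NormedAddCommGroup V] [NormedSpace ℝ V]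
    [FiniteDimensional ℝ V] {f : V →ₗ[ℝ] ℝ} (hf : f ≠ 0) (c : ℝ) :
    (interior {p | c ≤ f p}).Nonempty := by
  simpa using interior_setOf_le_nonempty (neg_ne_zero.mpr hf) (-c)

namespace Equiv

variable {X Y : Type*}

theorem symm_apply_eq_symm_apply_of_eqOn {α e : X ≃ Y} {s : Set X} (h : EqOn α e s) {y : Y}
    (hy : e.symm y ∈ s) : α.symm y = e.symm y := by
  rw [symm_apply_eq, h hy, apply_symm_apply]

theorem symm_apply_eq_symm_apply_of_eqOn_of_union {α e₁ e₂ : X ≃ Y} {s t : Set X}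
    (hst : s ∪ t = univ) (h₁ : EqOn α e₁ s) (h₂ : EqOn α e₂ t) {y : Y} (hy : e₁.symm y ∈ t) :
    α.symm y = e₂.symm y := by
  by_cases hxt : α.symm y ∈ t
  · rw [eq_symm_apply, ← h₂ hxt, apply_symm_apply]
  · have hxs : α.symm y ∈ s := (hst ▸ mem_univ _ : α.symm y ∈ s ∪ t).resolve_right hxt
    have hx : α.symm y = e₁.symm y :=
      (eq_symm_apply _).mpr ((h₁ hxs).symm.trans (apply_symm_apply _ _))
    exact absurd (hx ▸ hy) hxt

end Equiv

/-- The inverse of an invertible half-plane-affine map of `ℝ²` is a half-plane-affine map. -/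
theorem stmt8 (α : (ℝ × ℝ) ≃ (ℝ × ℝ)) (hα : IsHalfPlaneAffine ⇑α) :
    IsHalfPlaneAffine ⇑α.symm := by
  obtain ⟨-, f, c, hf, α₁, α₂, h₁, h₂⟩ := hα
  have hunion : {p | f p ≤ c} ∪ {p | c ≤ f p} = univ := by ext p; simp [le_total]
  let e₁ := AffineEquiv.ofBijective (α₁.bijective_of_injOn (f.interior_setOf_le_nonempty hf c)
    (α.injective.injOn.congr h₁))
  let e₂ := AffineEquiv.ofBijective (α₂.bijective_of_injOn (f.interior_setOf_ge_nonempty hf c)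
    (α.injective.injOn.congr h₂))
  let k : ℝ × ℝ →ᵃ[ℝ] ℝ := f.toAffineMap.comp e₁.symm.toAffineMap
  have hk : k.linear ≠ 0 := by
    obtain ⟨u, hu⟩ : ∃ u, f u ≠ 0 := by simpa [LinearMap.ext_iff] using hf
    refine fun h => hu ?_
    simpa [k] using LinearMap.congr_fun h (e₁.linear u)
  refine ⟨α.symm.bijective, k.linear, c - k 0, hk, e₁.symm.toAffineMap, e₂.symm.toAffineMap,
    fun y hy => ?_, fun y hy => ?_⟩
  · refine Equiv.symm_apply_eq_symm_apply_of_eqOn (e := e₁.toEquiv) h₁ ?_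
    show k y ≤ c
    linarith [k.apply_eq_linear_add y]
  · refine Equiv.symm_apply_eq_symm_apply_of_eqOn_of_union (e₁ := e₁.toEquiv) (e₂ := e₂.toEquiv)
      hunion h₁ h₂ ?_
    show c ≤ k y
    linarith [k.apply_eq_linear_add y]
end

section
/- Let α be an invertible half-plane-affine map of ℝ². For any finite list S = [x₀,…,xₙ] of points in ℝ² with image list Ŝ = [α(x₀),…,α(xₙ)], the variation factors satisfy (1/2)·vf(S) ≤ vf(Ŝ) ≤ 2·vf(S). -/
/-- `[x i, x (i+1)]` is a crossing segment of the list `x₀, …, xₙ` on the line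
`{p | g p = c}` (where `g` is a nonzero linear functional). -/
def IsCrossing {n : ℕ} (x : Fin (n + 1) → ℝ × ℝ) (g : ℝ × ℝ →ₗ[ℝ] ℝ) (c : ℝ)
    (i : Fin n) : Prop :=
  (g (x i.castSucc) < c ∧ c < g (x i.succ)) ∨
  (g (x i.succ) < c ∧ c < g (x i.castSucc)) ∨
  ((i : ℕ) = 0 ∧ g (x i.castSucc) = c) ∨
  (0 < (i : ℕ) ∧ g (x i.castSucc) = c ∧
    g (x ⟨(i : ℕ) - 1, lt_of_le_of_lt (Nat.sub_le _ _) (Nat.lt_succ_of_lt i.isLt)⟩) ≠ c) ∨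
  ((i : ℕ) = n - 1 ∧ g (x i.castSucc) ≠ c ∧ g (x i.succ) = c)

/-- `vf(S, ℓ)`: the number of crossing segments of the list on the line `{p | g p = c}`. -/
noncomputable def vfOn {n : ℕ} (x : Fin (n + 1) → ℝ × ℝ) (g : ℝ × ℝ →ₗ[ℝ] ℝ) (c : ℝ) : ℕ :=
  {i : Fin n | IsCrossing x g c i}.ncard

/-- `vf(S)`: the variation factor of the list, the maximum of `vf(S, ℓ)` over all lines. -/
noncomputable def vf {n : ℕ} (x : Fin (n + 1) → ℝ × ℝ) : ℕ :=
  sSup {k : ℕ | ∃ (g : ℝ × ℝ →ₗ[ℝ] ℝ) (c : ℝ), g ≠ 0 ∧ k = vfOn x g c}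

/-- `cvar(f, S)`: the curve variation of `f` along the list. -/
noncomputable def cvar {n : ℕ} (f : ℝ × ℝ → ℂ) (x : Fin (n + 1) → ℝ × ℝ) : ℝ :=
  ∑ i : Fin n, ‖f (x i.succ) - f (x i.castSucc)‖

/-- The set of quotients `cvar(f,S)/vf(S)` over finite lists `S` in `σ`. -/
def varSet (f : ℝ × ℝ → ℂ) (σ : Set (ℝ × ℝ)) : Set ℝ :=
  {r : ℝ | ∃ (n : ℕ) (x : Fin (n + 1) → ℝ × ℝ), (∀ i, x i ∈ σ) ∧ r = cvar f x / (vf x : ℝ)}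

/-- `var(f, σ)`: the two-dimensional variation of `f` on `σ`. -/
noncomputable def var2 (f : ℝ × ℝ → ℂ) (σ : Set (ℝ × ℝ)) : ℝ :=
  sSup (varSet f σ)

/-!
On each closed half-plane `α` is affine, so for a line `ℓ = {g = c}` the signed values
`g (α xᵢ) - c` coincide with `A₁ xᵢ` or `A₂ xᵢ`, where `Aⱼ = (g - c) ∘ αⱼ` cut out the lines
`αⱼ⁻¹ ℓ`, according to the side of the splitting line `{φ = 0}` on which `xᵢ` lies. As
`α₁ = α₂` on that line, `A₁ - A₂` is a multiple of `φ`, and this forces every sign change of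
the mixed sequence to be a sign change of `A₁ xᵢ` or of `A₂ xᵢ`. Counting crossing segments as
sign changes gives `vf(Ŝ, ℓ) ≤ vf(S, α₁⁻¹ ℓ) + vf(S, α₂⁻¹ ℓ) ≤ 2 vf(S)`. The other bound is the
same argument for `α⁻¹`, which is `α₁⁻¹` on `α₁ {φ ≤ 0}` and `α₂⁻¹` on the complement.
-/

open Function

section SignSequences

def IsSignEvent (d : ℕ → ℝ) : ℕ → Prop
  | 0 => d 0 = 0
  | j + 1 => d j ≠ 0 ∧ d j * d (j + 1) ≤ 0

def IsSignCrossing (n : ℕ) (d : ℕ → ℝ) (i : ℕ) : Prop :=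
  d i * d (i + 1) < 0 ∨ (d i = 0 ∧ (i = 0 ∨ d (i - 1) ≠ 0)) ∨
    (i + 1 = n ∧ d i ≠ 0 ∧ d (i + 1) = 0)

noncomputable def signEventCount (n : ℕ) (d : ℕ → ℝ) : ℕ :=
  {j | j ≤ n ∧ IsSignEvent d j}.ncard

variable {d : ℕ → ℝ}

lemma isSignEvent_iff_of_eq_zero {i : ℕ} (hi : d i = 0) :
    IsSignEvent d i ↔ i = 0 ∨ d (i - 1) ≠ 0 := by
  cases i with
  | zero => simpa [IsSignEvent] using hi
  | succ i => simp [IsSignEvent, hi]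

lemma isSignEvent_succ_iff_of_ne_zero {i : ℕ} (hi : d (i + 1) ≠ 0) :
    IsSignEvent d (i + 1) ↔ d i * d (i + 1) < 0 :=
  ⟨fun ⟨h₀, h⟩ => h.lt_of_ne (mul_ne_zero h₀ hi), fun h => ⟨left_ne_zero_of_mul h.ne, h.le⟩⟩

/-- A crossing segment `[i, i + 1]` is charged to `i` if `d i = 0` and to `i + 1` otherwise. -/
lemma ncard_isSignCrossing_eq_signEventCount {n : ℕ} (hn : 0 < n) (d : ℕ → ℝ) :
    {i | i < n ∧ IsSignCrossing n d i}.ncard = signEventCount n d := by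
  classical
  refine Set.ncard_congr (fun i _ => if d i = 0 then i else i + 1) ?_ ?_ ?_
  · rintro i ⟨hi, hcross⟩
    by_cases hdi : d i = 0
    · simp only [hdi, if_true]
      refine ⟨hi.le, (isSignEvent_iff_of_eq_zero hdi).2 ?_⟩
      rcases hcross with h | h | h
      · simp [hdi] at h
      · exact h.2
      · exact absurd hdi h.2.1
    · simp only [hdi, if_false]
      refine ⟨hi, hdi, ?_⟩
      rcases hcross with h | h | h
      · exact h.le
      · exact absurd h.1 hdi
      · rw [h.2.2, mul_zero]
  · rintro i i' ⟨hi, hcross⟩ ⟨hi', hcross'⟩ h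
    have hnext : ∀ {k}, IsSignCrossing n d k → d k ≠ 0 → k + 1 < n → d (k + 1) ≠ 0 := by
      rintro k (h | h | h) hk hkn
      · exact right_ne_zero_of_mul h.ne
      · exact absurd h.1 hk
      · omega
    by_cases hdi : d i = 0 <;> by_cases hdi' : d i' = 0 <;>
      simp only [hdi, hdi', if_true, if_false] at h
    · exact h
    · exact absurd (h ▸ hdi) (hnext hcross' hdi' (h ▸ hi))
    · exact absurd (h ▸ hdi') (hnext hcross hdi (h ▸ hi'))
    · omega
  · rintro j ⟨hj, hev⟩
    by_cases hdj : d j = 0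
    · rw [isSignEvent_iff_of_eq_zero hdj] at hev
      rcases hj.lt_or_eq with hjn | rfl
      · exact ⟨j, ⟨hjn, Or.inr (Or.inl ⟨hdj, hev⟩)⟩, if_pos hdj⟩
      · obtain ⟨i, rfl⟩ : ∃ i, j = i + 1 := Nat.exists_eq_succ_of_ne_zero hn.ne'
        have hdi : d i ≠ 0 := by simpa using hev
        exact ⟨i, ⟨by omega, Or.inr (Or.inr ⟨rfl, hdi, hdj⟩)⟩, if_neg hdi⟩
    · obtain ⟨i, rfl⟩ : ∃ i, j = i + 1 :=
        Nat.exists_eq_succ_of_ne_zero (by rintro rfl; exact hdj hev)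
      rw [isSignEvent_succ_iff_of_ne_zero hdj] at hev
      exact ⟨i, ⟨by omega, Or.inl hev⟩, if_neg (left_ne_zero_of_mul hev.ne)⟩

lemma sign_change_of_switch {a₀ a₁ b₀ b₁ φ₀ φ₁ : ℝ}
    (hab : (a₀ - b₀) * φ₁ = (a₁ - b₁) * φ₀) (hφ₀ : φ₀ ≤ 0) (hφ₁ : 0 ≤ φ₁) (hφ : φ₀ < φ₁)
    (ha₀ : a₀ ≠ 0) (hab₁ : a₀ * b₁ ≤ 0) :
    a₀ * a₁ ≤ 0 ∨ (b₀ ≠ 0 ∧ b₀ * b₁ ≤ 0) := by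
  by_contra! h
  have hab₀ : 0 < a₀ * b₀ := by
    by_contra! hab₀
    have hQ : 0 < a₀ * a₀ - a₀ * b₀ := by nlinarith [mul_self_pos.2 ha₀]
    have hP : 0 < a₀ * a₁ - a₀ * b₁ := by linarith [h.1]
    have key : (a₀ * a₀ - a₀ * b₀) * φ₁ = (a₀ * a₁ - a₀ * b₁) * φ₀ := by
      linear_combination a₀ * hab
    rcases hφ₁.lt_or_eq with hφ₁ | rfl
    · nlinarith [mul_pos hQ hφ₁, mul_nonpos_of_nonneg_of_nonpos hP.le hφ₀]
    · nlinarith [mul_neg_of_pos_of_neg hP hφ]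
  have hb₀ : b₀ ≠ 0 := by rintro rfl; simp at hab₀
  nlinarith [mul_pos hab₀ (h.2 hb₀), mul_nonpos_of_nonneg_of_nonpos (mul_self_nonneg b₀) hab₁]

variable {a b φ : ℕ → ℝ} {l : ℝ}

lemma isSignEvent_of_piecewise (hab : ∀ k, a k - b k = l * φ k)
    (ha : ∀ k, φ k ≤ 0 → d k = a k) (hb : ∀ k, 0 ≤ φ k → d k = b k) {j : ℕ}
    (hd : IsSignEvent d j) : IsSignEvent a j ∨ IsSignEvent b j := by
  cases j with
  | zero =>
    rcases le_total (φ 0) 0 with h | h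
    · exact Or.inl ((ha 0 h).symm.trans hd)
    · exact Or.inr ((hb 0 h).symm.trans hd)
  | succ j =>
    have key : (a j - b j) * φ (j + 1) = (a (j + 1) - b (j + 1)) * φ j := by
      rw [hab, hab]; ring
    obtain ⟨hd₀, hd₁⟩ := hd
    rcases le_or_gt (φ j) 0 with h₀ | h₀ <;> rcases le_or_gt (φ (j + 1)) 0 with h₁ | h₁
    · rw [ha j h₀, ha _ h₁] at *
      exact Or.inl ⟨hd₀, hd₁⟩
    · rw [ha j h₀, hb _ h₁.le] at *
      exact (sign_change_of_switch key h₀ h₁.le (h₀.trans_lt h₁) hd₀ hd₁).imp_left (⟨hd₀, ·⟩)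
    · rw [hb j h₀.le, ha _ h₁] at *
      have key' : (b j - a j) * -φ (j + 1) = (b (j + 1) - a (j + 1)) * -φ j := by
        linear_combination key
      exact (sign_change_of_switch key' (by linarith) (by linarith) (by linarith) hd₀
        hd₁).symm.imp_right (⟨hd₀, ·⟩)
    · rw [hb j h₀.le, hb _ h₁.le] at *
      exact Or.inr ⟨hd₀, hd₁⟩

lemma signEventCount_le_add (n : ℕ) (hab : ∀ k, a k - b k = l * φ k)
    (ha : ∀ k, φ k ≤ 0 → d k = a k) (hb : ∀ k, 0 ≤ φ k → d k = b k) :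
    signEventCount n d ≤ signEventCount n a + signEventCount n b := by
  refine (Set.ncard_le_ncard ?_ ((Set.finite_Iic n).subset ?_)).trans (Set.ncard_union_le _ _)
  · rintro j ⟨hj, hd⟩
    exact (isSignEvent_of_piecewise hab ha hb hd).imp (⟨hj, ·⟩) (⟨hj, ·⟩)
  · rintro j (⟨hj, -⟩ | ⟨hj, -⟩) <;> exact hj

end SignSequences

lemma AffineMap.exists_eq_mul_of_eq_zero {𝕜 V : Type*} [Field 𝕜] [AddCommGroup V]
    [Module 𝕜 V] (A ψ : V →ᵃ[𝕜] 𝕜) (hψ : ψ.linear ≠ 0) (hA : ∀ p, ψ p = 0 → A p = 0) :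
    ∃ l : 𝕜, ∀ p, A p = l * ψ p := by
  obtain ⟨v, hv⟩ := LinearMap.surjective hψ 1
  have shift : ∀ (F : V →ᵃ[𝕜] 𝕜) p, F (-(ψ p • v) +ᵥ p) = F p - ψ p * F.linear v := by
    intro F p
    rw [F.map_vadd, map_neg, map_smul, vadd_eq_add, smul_eq_mul]
    ring
  refine ⟨A.linear v, fun p => ?_⟩
  have h := hA (-(ψ p • v) +ᵥ p) (by rw [shift, hv, mul_one, sub_self])
  rw [shift] at h
  linear_combination h

lemma AffineMap.injective_of_eqOn_nonpos {V W : Type*} [AddCommGroup V] [Module ℝ V]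
    [AddCommGroup W] [Module ℝ W] {α : V → W} (hα : Injective α) {φ : V →ᵃ[ℝ] ℝ}
    (hφ : φ.linear ≠ 0) {T : V →ᵃ[ℝ] W} (hT : ∀ p, φ p ≤ 0 → α p = T p) : Injective T := by
  rw [← T.linear_injective_iff, injective_iff_map_eq_zero]
  obtain ⟨p, hp⟩ := φ.linear_surjective_iff.1 (LinearMap.surjective hφ) 0
  have key : ∀ w, T.linear w = 0 → φ.linear w ≤ 0 → w = 0 := by
    intro w hw hφw
    have hq : φ (w +ᵥ p) ≤ 0 := by rw [φ.map_vadd, hp, vadd_eq_add, add_zero]; exact hφw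
    have hαq : α (w +ᵥ p) = α p := by
      rw [hT _ hq, hT p hp.le, T.map_vadd, hw, zero_vadd]
    simpa using hα hαq
  intro w hw
  rcases le_total (φ.linear w) 0 with h | h
  · exact key w hw h
  · exact neg_eq_zero.1 (key (-w) (by rw [map_neg, hw, neg_zero]) (by rw [map_neg]; linarith))

lemma AffineMap.bijective_of_injective {V : Type*} [AddCommGroup V] [Module ℝ V]
    [FiniteDimensional ℝ V] {T : V →ᵃ[ℝ] V} (hT : Injective T) : Bijective T := by
  refine ⟨hT, ?_⟩
  rw [← T.linear_surjective_iff, ← LinearMap.injective_iff_surjective, T.linear_injective_iff]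
  exact hT

lemma AffineMap.comp_affineEquiv_linear_ne_zero {k V₁ V₂ : Type*} [Field k] [AddCommGroup V₁]
    [Module k V₁] [AddCommGroup V₂] [Module k V₂] {φ : V₂ →ᵃ[k] k} (hφ : φ.linear ≠ 0)
    (T : V₁ ≃ᵃ[k] V₂) : (φ.comp T.toAffineMap).linear ≠ 0 := by
  rw [AffineMap.comp_linear, AffineEquiv.linear_toAffineMap]
  intro h
  exact hφ ((LinearMap.cancel_right T.linear.surjective).1 (h.trans (LinearMap.zero_comp _).symm))

lemma IsHalfPlaneAffine.exists_affineEquiv {α : ℝ × ℝ → ℝ × ℝ} (hα : IsHalfPlaneAffine α) :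
    ∃ (φ : ℝ × ℝ →ᵃ[ℝ] ℝ) (e₁ e₂ : ℝ × ℝ ≃ᵃ[ℝ] ℝ × ℝ), φ.linear ≠ 0 ∧
      (∀ p, φ p ≤ 0 → α p = e₁ p) ∧ (∀ p, 0 ≤ φ p → α p = e₂ p) := by
  obtain ⟨hbij, f, c, hf, α₁, α₂, h₁, h₂⟩ := hα
  let φ : ℝ × ℝ →ᵃ[ℝ] ℝ := f.toAffineMap - AffineMap.const ℝ _ c
  have hφ : φ.linear ≠ 0 := by simpa [φ] using hf
  have hα₁ : ∀ p, φ p ≤ 0 → α p = α₁ p := fun p hp => h₁ p (by simpa [φ] using hp)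
  have hα₂ : ∀ p, (-φ) p ≤ 0 → α p = α₂ p := fun p hp => h₂ p (by simpa [φ] using hp)
  have bij₁ := AffineMap.bijective_of_injective (AffineMap.injective_of_eqOn_nonpos hbij.1 hφ hα₁)
  have bij₂ := AffineMap.bijective_of_injective
    (AffineMap.injective_of_eqOn_nonpos hbij.1 (by simpa using hφ) hα₂)
  exact ⟨φ, .ofBijective bij₁, .ofBijective bij₂, hφ, hα₁, fun p hp => hα₂ p (by simpa using hp)⟩

section VariationFactor

-- A list `x` is read at `k : ℕ` through the cast `ℕ → Fin (n + 1)`, which wraps around;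
-- only indices `k ≤ n` are ever counted.
open Fin.NatCast

variable {n : ℕ}

lemma isCrossing_iff_isSignCrossing (x : Fin (n + 1) → ℝ × ℝ) (g : ℝ × ℝ →ₗ[ℝ] ℝ) (c : ℝ)
    (i : Fin n) : IsCrossing x g c i ↔ IsSignCrossing n (fun k => g (x k) - c) i := by
  have hcast : x ((i : ℕ) : Fin (n + 1)) = x i.castSucc := by simp
  have hsucc : x ((i + 1 : ℕ) : Fin (n + 1)) = x i.succ := by simp
  have hprev : x ((i - 1 : ℕ) : Fin (n + 1)) =
      x ⟨(i : ℕ) - 1, lt_of_le_of_lt (Nat.sub_le _ _) (Nat.lt_succ_of_lt i.isLt)⟩ := by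
    rw [Fin.natCast_eq_mk]
  have hlast : (i : ℕ) = n - 1 ↔ (i : ℕ) + 1 = n := by omega
  simp only [IsCrossing, IsSignCrossing, hcast, hsucc, hprev, hlast, mul_neg_iff, sub_pos,
    sub_neg, sub_eq_zero, sub_ne_zero, Nat.pos_iff_ne_zero]
  tauto

lemma vfOn_eq_signEventCount (hn : 0 < n) (x : Fin (n + 1) → ℝ × ℝ) (g : ℝ × ℝ →ₗ[ℝ] ℝ)
    (c : ℝ) : vfOn x g c = signEventCount n (fun k => g (x k) - c) := by
  rw [vfOn, ← ncard_isSignCrossing_eq_signEventCount hn]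
  refine Set.ncard_congr (fun i _ => (i : ℕ)) ?_ (fun i i' _ _ => Fin.ext) ?_
  · exact fun i hi => ⟨i.isLt, (isCrossing_iff_isSignCrossing x g c i).1 hi⟩
  · exact fun i ⟨hi, h⟩ => ⟨⟨i, hi⟩, (isCrossing_iff_isSignCrossing x g c ⟨i, hi⟩).2 h, rfl⟩

lemma vfOn_le_vf (x : Fin (n + 1) → ℝ × ℝ) {g : ℝ × ℝ →ₗ[ℝ] ℝ} (hg : g ≠ 0) (c : ℝ) :
    vfOn x g c ≤ vf x := by
  refine le_csSup ⟨n, ?_⟩ ⟨g, c, hg, rfl⟩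
  rintro _ ⟨g, c, -, rfl⟩
  exact (Set.ncard_le_card _).trans (Nat.card_fin n).le

lemma signEventCount_le_vf (hn : 0 < n) (x : Fin (n + 1) → ℝ × ℝ) {A : ℝ × ℝ →ᵃ[ℝ] ℝ}
    (hA : A.linear ≠ 0) : signEventCount n (fun k => A (x k)) ≤ vf x := by
  have hline : (fun k : ℕ => A (x k)) = fun k : ℕ => A.linear (x k) - -A 0 := by
    ext k
    rw [sub_neg_eq_add]
    exact congrFun A.decomp _
  rw [hline, ← vfOn_eq_signEventCount hn]
  exact vfOn_le_vf x hA _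

lemma vf_le_two_mul_of_eqOn_halfPlanes {x z : Fin (n + 1) → ℝ × ℝ}
    {ψ : ℝ × ℝ →ᵃ[ℝ] ℝ} {T₁ T₂ : ℝ × ℝ ≃ᵃ[ℝ] ℝ × ℝ} (hψ : ψ.linear ≠ 0)
    (hT : ∀ p, ψ p = 0 → T₁ p = T₂ p) (h₁ : ∀ k, ψ (x k) ≤ 0 → z k = T₁ (x k))
    (h₂ : ∀ k, 0 ≤ ψ (x k) → z k = T₂ (x k)) :
    vf z ≤ 2 * vf x := by
  refine csSup_le' ?_
  rintro _ ⟨g, c, hg, rfl⟩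
  rcases n.eq_zero_or_pos with rfl | hn
  · simp [vfOn, Set.eq_empty_of_isEmpty]
  let L : ℝ × ℝ →ᵃ[ℝ] ℝ := g.toAffineMap - AffineMap.const ℝ _ c
  have hL : L.linear ≠ 0 := by simpa [L] using hg
  obtain ⟨l, hl⟩ := AffineMap.exists_eq_mul_of_eq_zero
    (L.comp T₁.toAffineMap - L.comp T₂.toAffineMap) ψ hψ (fun p hp => by simp [hT p hp])
  calc vfOn z g c = signEventCount n (fun k => g (z k) - c) := vfOn_eq_signEventCount hn z g c
    _ ≤ signEventCount n (fun k => L.comp T₁.toAffineMap (x k)) +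
        signEventCount n (fun k => L.comp T₂.toAffineMap (x k)) :=
      signEventCount_le_add n (φ := fun k => ψ (x k)) (fun k => by simpa using hl (x k))
        (fun k hk => by simp [h₁ _ hk, L]) (fun k hk => by simp [h₂ _ hk, L])
    _ ≤ vf x + vf x :=
      add_le_add (signEventCount_le_vf hn x (AffineMap.comp_affineEquiv_linear_ne_zero hL T₁))
        (signEventCount_le_vf hn x (AffineMap.comp_affineEquiv_linear_ne_zero hL T₂))
    _ = 2 * vf x := (two_mul _).symm

lemma vf_le_two_mul_vf_comp {α : ℝ × ℝ → ℝ × ℝ} (hα : Injective α) {φ : ℝ × ℝ →ᵃ[ℝ] ℝ}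
    {e₁ e₂ : ℝ × ℝ ≃ᵃ[ℝ] ℝ × ℝ} (hφ : φ.linear ≠ 0) (h₁ : ∀ p, φ p ≤ 0 → α p = e₁ p)
    (h₂ : ∀ p, 0 ≤ φ p → α p = e₂ p) (x : Fin (n + 1) → ℝ × ℝ) :
    vf x ≤ 2 * vf (fun i => α (x i)) := by
  have hψ_apply : ∀ q, (φ.comp e₁.symm.toAffineMap) q = φ (e₁.symm q) := fun _ => rfl
  refine vf_le_two_mul_of_eqOn_halfPlanes (ψ := φ.comp e₁.symm.toAffineMap) (T₁ := e₁.symm)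
    (T₂ := e₂.symm) (AffineMap.comp_affineEquiv_linear_ne_zero hφ _) ?_ ?_ ?_
  · intro q hq
    rw [hψ_apply] at hq
    rw [eq_comm, e₂.symm_apply_eq, ← h₂ _ hq.ge, h₁ _ hq.le, e₁.apply_symm_apply]
  · intro k hk
    rw [hψ_apply] at hk
    exact hα (by rw [h₁ _ hk, e₁.apply_symm_apply])
  · intro k hk
    rw [hψ_apply] at hk
    rcases le_or_gt 0 (φ (x k)) with hx | hx
    · rw [h₂ _ hx, e₂.symm_apply_apply]
    · rw [h₁ _ hx.le, e₁.symm_apply_apply] at hk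
      exact absurd hk hx.not_ge

end VariationFactor

/-- For an invertible half-plane-affine map `α` and any finite list `S` of points of `ℝ²`
with image list `Ŝ = α(S)`, the variation factors satisfy
`(1/2)·vf(S) ≤ vf(Ŝ) ≤ 2·vf(S)`. -/
theorem stmt13 (α : ℝ × ℝ → ℝ × ℝ) (hα : IsHalfPlaneAffine α)
    (n : ℕ) (x : Fin (n + 1) → ℝ × ℝ) :
    vf x ≤ 2 * vf (fun i => α (x i)) ∧ vf (fun i => α (x i)) ≤ 2 * vf x := by
  obtain ⟨φ, e₁, e₂, hφ, h₁, h₂⟩ := hα.exists_affineEquiv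
  refine ⟨vf_le_two_mul_vf_comp hα.1.1 hφ h₁ h₂ x, ?_⟩
  exact vf_le_two_mul_of_eqOn_halfPlanes hφ (fun p hp => (h₁ p hp.le).symm.trans (h₂ p hp.ge))
    (fun k => h₁ _) (fun k => h₂ _)
end
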